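/- Let x be a market and let P = {k ∈ {1,…,K} : price v_k is optimal for x}. Then x lies in the convex hull of the finite set {x^S : P ⊆ S ⊆ {1,…,K}}. -/

import Mathlib

open Finset

/-- A market: a probability vector over the `K` valuations. -/
def IsMarket (K : ℕ) (x : Fin K → ℝ) : Prop :=
  (∀ j, 0 ≤ x j) ∧ ∑ j, x j = 1

/-- Revenue from charging price `v k` in market `x`. -/
def rev {K : ℕ} (v x : Fin K → ℝ) (k : Fin K) : ℝ :=
  v k * ∑ j ∈ Finset.Ici k, x j

/-- Price `v k` is optimal for market `x`. -/
def OptPrice {K : ℕ} (v x : Fin K → ℝ) (k : Fin K) : Prop :=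
  ∀ i, rev v x i ≤ rev v x k

/-- A segmentation of the aggregate market `xstar`: a finitely supported probability
distribution on markets averaging to `xstar`. -/
def IsSegmentation {K : ℕ} (xstar : Fin K → ℝ) (σ : (Fin K → ℝ) →₀ ℝ) : Prop :=
  (∀ x, 0 ≤ σ x) ∧ (∑ x ∈ σ.support, σ x = 1) ∧
  (∀ x ∈ σ.support, IsMarket K x) ∧
  (∑ x ∈ σ.support, σ x • x = xstar)

/-- A pricing rule assigns a probability vector over prices to each market in the support. -/
def IsPricingRule {K : ℕ} (σ : (Fin K → ℝ) →₀ ℝ) (φ : (Fin K → ℝ) → Fin K → ℝ) : Prop :=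
  ∀ x ∈ σ.support, (∀ k, 0 ≤ φ x k) ∧ ∑ k, φ x k = 1

/-- A pricing rule is optimal if it only charges optimal prices. -/
def IsOptimalPricing {K : ℕ} (v : Fin K → ℝ) (σ : (Fin K → ℝ) →₀ ℝ)
    (φ : (Fin K → ℝ) → Fin K → ℝ) : Prop :=
  ∀ x ∈ σ.support, ∀ k, 0 < φ x k → OptPrice v x k

/-- Consumer surplus of a segmentation and pricing rule. -/
def consumerSurplus {K : ℕ} (v : Fin K → ℝ) (σ : (Fin K → ℝ) →₀ ℝ)
    (φ : (Fin K → ℝ) → Fin K → ℝ) : ℝ :=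
  ∑ x ∈ σ.support, σ x * ∑ k, φ x k * ∑ j ∈ Finset.Ici k, (v j - v k) * x j

/-- Producer surplus of a segmentation and pricing rule. -/
def producerSurplus {K : ℕ} (v : Fin K → ℝ) (σ : (Fin K → ℝ) →₀ ℝ)
    (φ : (Fin K → ℝ) → Fin K → ℝ) : ℝ :=
  ∑ x ∈ σ.support, σ x * ∑ k, φ x k * (v k * ∑ j ∈ Finset.Ici k, x j)

/-- A direct segmentation: markets `xs k` for `k ∈ A`, pairwise distinct, with
`xs k ∈ X_k`, weights `w k > 0` summing to one and averaging to `xstar`. -/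
def IsDirectSeg {K : ℕ} (v xstar : Fin K → ℝ) (A : Finset (Fin K))
    (xs : Fin K → Fin K → ℝ) (w : Fin K → ℝ) : Prop :=
  Set.InjOn xs (A : Set (Fin K)) ∧
  (∀ k ∈ A, IsMarket K (xs k)) ∧
  (∀ k ∈ A, OptPrice v (xs k) k) ∧
  (∀ k ∈ A, 0 < w k) ∧
  (∑ k ∈ A, w k = 1) ∧
  (∑ k ∈ A, w k • xs k = xstar)

/-- Consumer surplus of a direct segmentation (with its direct pricing rule). -/
def directCS {K : ℕ} (v : Fin K → ℝ) (A : Finset (Fin K))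
    (xs : Fin K → Fin K → ℝ) (w : Fin K → ℝ) : ℝ :=
  ∑ k ∈ A, w k * ∑ j ∈ Finset.Ici k, (v j - v k) * xs k j

/-- Producer surplus of a direct segmentation (with its direct pricing rule). -/
def directPS {K : ℕ} (v : Fin K → ℝ) (A : Finset (Fin K))
    (xs : Fin K → Fin K → ℝ) (w : Fin K → ℝ) : ℝ :=
  ∑ k ∈ A, w k * (v k * ∑ j ∈ Finset.Ici k, xs k j)

/-- `x` is the characteristic market `x^S`: supported in `S`, and every price in `S`
yields the same revenue. -/
def IsCharMarket {K : ℕ} (v : Fin K → ℝ) (S : Finset (Fin K)) (x : Fin K → ℝ) : Prop :=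
  IsMarket K x ∧ (∀ j ∉ S, x j = 0) ∧ ∀ i ∈ S, ∀ i' ∈ S, rev v x i = rev v x i'

/-- The joint distribution over valuations and prices induced by `(σ, φ)`:
mass of the pair `(v j, v k)`. -/
def jointDist {K : ℕ} (σ : (Fin K → ℝ) →₀ ℝ) (φ : (Fin K → ℝ) → Fin K → ℝ)
    (j k : Fin K) : ℝ :=
  ∑ x ∈ σ.support, σ x * φ x k * x j

/-- The joint distribution over valuations and prices induced by a direct segmentation
with its direct pricing rule. -/
def directJoint {K : ℕ} (A : Finset (Fin K)) (xs : Fin K → Fin K → ℝ) (w : Fin K → ℝ)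
    (j k : Fin K) : ℝ :=
  if k ∈ A then w k * xs k j else 0

/-- The total mass `m_k` of price `v k` under `(σ, φ)`. -/
noncomputable def mass {K : ℕ} (σ : (Fin K → ℝ) →₀ ℝ) (φ : (Fin K → ℝ) → Fin K → ℝ)
    (k : Fin K) : ℝ :=
  ∑ x ∈ σ.support, σ x * φ x k

/-- The conditional market `x^k` given price `v k` under `(σ, φ)`. -/
noncomputable def condMarket {K : ℕ} (σ : (Fin K → ℝ) →₀ ℝ) (φ : (Fin K → ℝ) → Fin K → ℝ)
    (k : Fin K) : Fin K → ℝ :=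
  (mass σ φ k)⁻¹ • ∑ x ∈ σ.support, (σ x * φ x k) • x

/-!
Let `P` be the set of optimal prices of `x` and `y = x^P`. As `y` has the same revenue at every
price of `P`, subtracting `l • y` from `x` keeps all of `P` optimal as long as no other price
overtakes them and the remainder stays nonnegative. Taking `l ∈ [0, 1)` maximal for these finitely
many linear constraints (a ratio test), the renormalised remainder `x'` is a market with
`x = l • y + (1 - l) • x'` and an additional optimal price: the tight constraint cannot be a
coordinate in `P` dropping to zero, because optimal prices carry positive mass. Induction on the
number of non-optimal prices finishes the proof.
-/

lemma exists_max_mul_le {ι : Type*} [Fintype ι] (a b : ι → ℝ) (ha : ∀ i, 0 ≤ a i)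
    (hab : ∃ i, a i < b i) :
    ∃ l, 0 ≤ l ∧ l < 1 ∧ (∀ i, l * b i ≤ a i) ∧ ∃ i, 0 < b i ∧ l * b i = a i := by
  obtain ⟨i₁, hi₁⟩ := hab
  have hb₁ : 0 < b i₁ := (ha i₁).trans_lt hi₁
  obtain ⟨i₀, hi₀, hmin⟩ := (univ.filter (0 < b ·)).exists_min_image (fun i => a i / b i)
    ⟨i₁, by simpa using hb₁⟩
  have hb₀ : 0 < b i₀ := (mem_filter.1 hi₀).2
  refine ⟨a i₀ / b i₀, div_nonneg (ha i₀) hb₀.le, ?_, fun i => ?_, i₀, hb₀,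
    div_mul_cancel₀ _ hb₀.ne'⟩
  · exact (hmin i₁ (by simpa using hb₁)).trans_lt ((div_lt_one hb₁).2 hi₁)
  · rcases lt_or_ge 0 (b i) with hb | hb
    · exact (le_div_iff₀ hb).1 (hmin i (by simpa using hb))
    · exact (mul_nonpos_of_nonneg_of_nonpos (div_nonneg (ha i₀) hb₀.le) hb).trans (ha i)

section Market

variable {K : ℕ} {v x y : Fin K → ℝ}

lemma rev_smul (c : ℝ) (x : Fin K → ℝ) (k : Fin K) : rev v (c • x) k = c * rev v x k := by
  simp only [rev, Pi.smul_apply, smul_eq_mul, ← mul_sum]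
  ring

lemma rev_sub (x y : Fin K → ℝ) (k : Fin K) : rev v (x - y) k = rev v x k - rev v y k := by
  simp only [rev, Pi.sub_apply, sum_sub_distrib]
  ring

lemma IsMarket.exists_pos (hx : IsMarket K x) : ∃ j, 0 < x j := by
  obtain ⟨j, -, hj⟩ := exists_lt_of_sum_lt (s := univ) (f := 0) (g := x) (by simp [hx.2])
  exact ⟨j, hj⟩

lemma IsMarket.exists_lt_of_ne (hx : IsMarket K x) (hy : IsMarket K y) (hxy : x ≠ y) :
    ∃ j, x j < y j := by
  obtain ⟨j, -, hj⟩ := exists_pos_of_sum_zero_of_exists_nonzero (s := univ) (y - x)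
    (by simp [sum_sub_distrib, hx.2, hy.2])
    (by simpa [sub_eq_zero, funext_iff, eq_comm] using hxy)
  exact ⟨j, by simpa using hj⟩

lemma exists_sum_Ici_eq_sum_Ici {S : Finset (Fin K)} (hx : ∀ j ∉ S, x j = 0) {i : Fin K}
    (hi : ∃ s ∈ S, i ≤ s) : ∃ s ∈ S, i ≤ s ∧ ∑ j ∈ Ici i, x j = ∑ j ∈ Ici s, x j := by
  have hne : (S.filter (i ≤ ·)).Nonempty := by simpa [Finset.Nonempty] using hi
  obtain ⟨hsS, his⟩ := mem_filter.1 (min'_mem _ hne)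
  refine ⟨_, hsS, his, (sum_subset (fun j hj => ?_) fun j hj hjs => hx j fun hjS => ?_).symm⟩
  · exact mem_Ici.2 (his.trans (mem_Ici.1 hj))
  · exact hjs (mem_Ici.2 (min'_le _ _ (mem_filter.2 ⟨hjS, mem_Ici.1 hj⟩)))

lemma OptPrice.pos (hv0 : ∀ k, 0 < v k) (hv : StrictMono v) (hx : IsMarket K x) {k : Fin K}
    (hk : OptPrice v x k) : 0 < x k := by
  by_contra! hxk
  obtain ⟨j, hj⟩ := hx.exists_pos
  have hxj : x j ≤ ∑ i ∈ Ici j, x i := single_le_sum (fun i _ => hx.1 i) (mem_Ici.2 le_rfl)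
  have hrev : 0 < rev v x k := (mul_pos (hv0 j) (hj.trans_le hxj)).trans_le (hk j)
  have htail : 0 < ∑ i ∈ Ici k, x i := pos_of_mul_pos_right hrev (hv0 k).le
  obtain ⟨t, htk, ht⟩ :=
    exists_lt_of_sum_lt (s := Ici k) (f := 0) (g := x) (by simpa using htail)
  obtain ⟨s, hs, hks, hsum⟩ := exists_sum_Ici_eq_sum_Ici (S := univ.filter (0 < x ·))
    (fun i hi => le_antisymm (by simpa using hi) (hx.1 i))
    ⟨t, mem_filter.2 ⟨mem_univ t, ht⟩, mem_Ici.1 htk⟩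
  have hlt : k < s := lt_of_le_of_ne hks (by rintro rfl; exact hxk.not_gt (mem_filter.1 hs).2)
  refine (hk s).not_gt ?_
  rw [rev, rev, hsum]
  exact mul_lt_mul_of_pos_right (hv hlt) (hsum ▸ htail)

end Market

open scoped Classical in
noncomputable def optPrices {K : ℕ} (v x : Fin K → ℝ) : Finset (Fin K) :=
  univ.filter (OptPrice v x ·)

@[simp]
lemma mem_optPrices {K : ℕ} {v x : Fin K → ℝ} {k : Fin K} :
    k ∈ optPrices v x ↔ OptPrice v x k := by
  simp [optPrices]

noncomputable def residualMarket {K : ℕ} (x y : Fin K → ℝ) (l : ℝ) : Fin K → ℝ :=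
  (1 - l)⁻¹ • (x - l • y)

section Residual

variable {K : ℕ} {v x y : Fin K → ℝ} {l : ℝ}

lemma IsMarket.optPrices_nonempty (hx : IsMarket K x) : (optPrices v x).Nonempty := by
  obtain ⟨j, -⟩ := hx.exists_pos
  obtain ⟨k, -, hk⟩ := univ.exists_max_image (rev v x) ⟨j, mem_univ j⟩
  exact ⟨k, mem_optPrices.2 fun i => hk i (mem_univ i)⟩

lemma eq_smul_add_residualMarket (hl : l ≠ 1) :
    x = l • y + (1 - l) • residualMarket x y l := by
  rw [residualMarket, smul_smul, mul_inv_cancel₀ (sub_ne_zero.2 hl.symm), one_smul,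
    add_sub_cancel]

lemma isMarket_residualMarket (hx : IsMarket K x) (hy : IsMarket K y) (hl : l < 1)
    (hle : ∀ j, l * y j ≤ x j) : IsMarket K (residualMarket x y l) := by
  have h1l : 0 < 1 - l := sub_pos.2 hl
  refine ⟨fun j => mul_nonneg (inv_nonneg.2 h1l.le) (sub_nonneg.2 (hle j)), ?_⟩
  simp only [residualMarket, Pi.smul_apply, Pi.sub_apply, smul_eq_mul, ← mul_sum,
    sum_sub_distrib, hx.2, hy.2, mul_one]
  exact inv_mul_cancel₀ h1l.ne'

lemma optPrice_residualMarket_iff (hl : l < 1) {k : Fin K} :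
    OptPrice v (residualMarket x y l) k ↔
      ∀ i, rev v x i - l * rev v y i ≤ rev v x k - l * rev v y k := by
  have h1l : 0 < (1 - l)⁻¹ := inv_pos.2 (sub_pos.2 hl)
  simp only [OptPrice, residualMarket, rev_smul, rev_sub, mul_le_mul_iff_right₀ h1l]

lemma exists_optPrices_ssubset_residualMarket (hv0 : ∀ k, 0 < v k) (hv : StrictMono v)
    (hx : IsMarket K x) (hy : IsCharMarket v (optPrices v x) y) (hxy : x ≠ y) :
    ∃ l, 0 ≤ l ∧ l < 1 ∧ IsMarket K (residualMarket x y l) ∧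
      optPrices v x ⊂ optPrices v (residualMarket x y l) := by
  set P := optPrices v x
  obtain ⟨p, hp⟩ := hx.optPrices_nonempty (v := v)
  have hxP : ∀ k ∈ P, rev v x k = rev v x p := fun k hk =>
    le_antisymm (mem_optPrices.1 hp k) (mem_optPrices.1 hk p)
  -- constraints `inl j`: `x - l • y ≥ 0` at `j`; `inr i`: price `i` does not overtake `p`
  obtain ⟨l, hl0, hl1, hle, i, hbi, htight⟩ :=
    exists_max_mul_le (Sum.elim x fun i => rev v x p - rev v x i)
      (Sum.elim y fun i => rev v y p - rev v y i)
      (by rintro (j | i); exacts [hx.1 j, sub_nonneg.2 (mem_optPrices.1 hp i)])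
      (by obtain ⟨j, hj⟩ := hx.exists_lt_of_ne hy.1 hxy; exact ⟨.inl j, hj⟩)
  have hx' : IsMarket K (residualMarket x y l) :=
    isMarket_residualMarket hx hy.1 hl1 fun j => hle (.inl j)
  have hopt : ∀ k, rev v x k - l * rev v y k = rev v x p - l * rev v y p →
      k ∈ optPrices v (residualMarket x y l) := fun k hk =>
    mem_optPrices.2 ((optPrice_residualMarket_iff hl1).2 fun i => by
      have := hle (.inr i); simp only [Sum.elim_inr] at this; linarith)
  have hsub : P ⊆ optPrices v (residualMarket x y l) := fun k hk =>
    hopt k (by rw [hxP k hk, hy.2.2 k hk p hp])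
  refine ⟨l, hl0, hl1, hx', (ssubset_iff_of_subset hsub).2 ?_⟩
  rcases i with j | i
  · have hjP : j ∈ P := by_contra fun hj => hbi.ne' (hy.2.1 j hj)
    have hpos := (mem_optPrices.1 (hsub hjP)).pos hv0 hv hx'
    simp only [Sum.elim_inl] at htight
    simp [residualMarket, htight] at hpos
  · simp only [Sum.elim_inr] at hbi htight
    exact ⟨i, hopt i (by linarith), fun hiP => hbi.ne' (by rw [hy.2.2 i hiP p hp, sub_self])⟩

end Residual

theorem stmt6_general {K : ℕ} (v : Fin K → ℝ)
    (hv0 : ∀ k, 0 < v k) (hv : StrictMono v)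
    (xS : Finset (Fin K) → Fin K → ℝ)
    (hxS : ∀ S : Finset (Fin K), S.Nonempty → IsCharMarket v S (xS S))
    (x : Fin K → ℝ) (hx : IsMarket K x) :
    x ∈ convexHull ℝ
        (xS '' {S : Finset (Fin K) | ∀ k, OptPrice v x k → k ∈ S}) := by
  induction hn : K - (optPrices v x).card using Nat.strong_induction_on generalizing x with
  | _ n ih =>
  have hP : optPrices v x ∈ {S : Finset (Fin K) | ∀ k, OptPrice v x k → k ∈ S} :=
    fun k hk => mem_optPrices.2 hk
  have hy : xS (optPrices v x) ∈ convexHull ℝ (xS '' _) :=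
    subset_convexHull ℝ _ ⟨_, hP, rfl⟩
  by_cases hxy : x = xS (optPrices v x)
  · rwa [← hxy] at hy
  obtain ⟨l, hl0, hl1, hx', hsub⟩ :=
    exists_optPrices_ssubset_residualMarket hv0 hv hx (hxS _ hx.optPrices_nonempty) hxy
  have hcard : (optPrices v (residualMarket x (xS (optPrices v x)) l)).card ≤ K :=
    (card_le_univ _).trans_eq (Fintype.card_fin K)
  have hx'mem := convexHull_mono
    (Set.image_mono fun S (hS : ∀ k, _ → k ∈ S) k hk =>
      hS k (mem_optPrices.1 (hsub.subset (mem_optPrices.2 hk))))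
    (ih _ (by have := card_lt_card hsub; omega) _ hx' rfl)
  simpa only [← eq_smul_add_residualMarket hl1.ne] using
    convex_convexHull ℝ _ hy hx'mem hl0 (sub_nonneg.2 hl1.le) (add_sub_cancel l 1)

theorem stmt6 {K : ℕ} (hK : 2 ≤ K) (v : Fin K → ℝ)
    (hv0 : ∀ k, 0 < v k) (hv : StrictMono v)
    (xS : Finset (Fin K) → Fin K → ℝ)
    (hxS : ∀ S : Finset (Fin K), S.Nonempty → IsCharMarket v S (xS S))
    (x : Fin K → ℝ) (hx : IsMarket K x) :
    x ∈ convexHull ℝ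
        (xS '' {S : Finset (Fin K) | ∀ k, OptPrice v x k → k ∈ S}) :=
  stmt6_general v hv0 hv xS hxS x hx
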